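/- Suppose the block matrix Z = [[MᵀM − P, MᵀN],[NᵀM, NᵀN − Θ]] with P, Θ symmetric positive definite is negative semidefinite and P ≤ ϑ I with 0 < ϑ < 1. If moreover ξ(t)ᵀ ξ(t) ≤ δ for all t and Tr(Θ) ≤ θ̄, then the recursion e(t) = M e(t-1) + N ξ(t-1) satisfies limsup_{t→∞} ‖e(t)‖² ≤ λ_max(Θ) δ /(1−ϑ) ≤ θ̄ δ /(1−ϑ). -/

import Mathlib

/-!
Testing the negative semidefinite block matrix `Z` against `(x, u)` gives the dissipation
inequality `‖M x + N u‖² ≤ xᵀ P x + uᵀ Θ u`. With `P ≤ ϑ I` and `Θ ≤ λ_max(Θ) I`, the sequence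
`a t = ‖e t‖²` satisfies `a (t + 1) ≤ ϑ a t + λ_max(Θ) δ`, a contraction with fixed point
`λ_max(Θ) δ / (1 - ϑ)`, which therefore bounds its limsup. Finally `λ_max(Θ) ≤ Tr Θ` because the
eigenvalues of `Θ` are nonnegative and sum to its trace.
-/

open Matrix Filter

namespace Matrix

variable {ι κ : Type*} [Fintype ι] [Fintype κ]

theorem dotProduct_mulVec_le_of_posSemidef_smul_one_sub [DecidableEq ι] {A : Matrix ι ι ℝ}
    {c : ℝ} (h : (c • 1 - A).PosSemidef) (x : ι → ℝ) : x ⬝ᵥ A *ᵥ x ≤ c * (x ⬝ᵥ x) := by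
  have hx := h.dotProduct_mulVec_nonneg x
  simp only [star_trivial, sub_mulVec, dotProduct_sub, smul_mulVec, one_mulVec,
    dotProduct_smul, smul_eq_mul] at hx
  linarith

theorem IsHermitian.posSemidef_iSup_eigenvalues_smul_one_sub [DecidableEq ι] {A : Matrix ι ι ℝ}
    (hA : A.IsHermitian) : ((⨆ i, hA.eigenvalues i) • 1 - A).PosSemidef := by
  open scoped MatrixOrder in
  have hle : A ≤ algebraMap ℝ _ (⨆ i, hA.eigenvalues i) := by
    refine le_algebraMap_of_spectrum_le (fun x hx => ?_) hA
    obtain ⟨i, rfl⟩ := hA.spectrum_real_eq_range_eigenvalues ▸ hx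
    exact le_ciSup (Set.finite_range _).bddAbove i
  rwa [Algebra.algebraMap_eq_smul_one] at hle

theorem PosSemidef.iSup_eigenvalues_le_trace [DecidableEq ι] {A : Matrix ι ι ℝ}
    (hA : A.PosSemidef) : ⨆ i, hA.1.eigenvalues i ≤ A.trace := by
  have hsum : A.trace = ∑ i, hA.1.eigenvalues i := by
    simpa using hA.1.trace_eq_sum_eigenvalues
  rw [hsum]
  exact Real.iSup_le
    (fun i => Finset.single_le_sum (fun j _ => hA.eigenvalues_nonneg j) (Finset.mem_univ i))
    (Finset.sum_nonneg fun j _ => hA.eigenvalues_nonneg j)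

theorem dotProduct_self_mulVec_add_mulVec_le {M P : Matrix ι ι ℝ} {N : Matrix ι κ ℝ}
    {Θ : Matrix κ κ ℝ}
    (hZ : (-(fromBlocks (Mᵀ * M - P) (Mᵀ * N) (Nᵀ * M) (Nᵀ * N - Θ))).PosSemidef)
    (x : ι → ℝ) (u : κ → ℝ) :
    (M *ᵥ x + N *ᵥ u) ⬝ᵥ (M *ᵥ x + N *ᵥ u) ≤ x ⬝ᵥ P *ᵥ x + u ⬝ᵥ Θ *ᵥ u := by
  have h := hZ.dotProduct_mulVec_nonneg (Sum.elim x u)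
  simp only [star_trivial, neg_mulVec, dotProduct_neg, fromBlocks_mulVec, sub_mulVec,
    sumElim_dotProduct_sumElim, dotProduct_add, dotProduct_sub, ← mulVec_mulVec,
    dotProduct_mulVec (v := x), dotProduct_mulVec (v := u), vecMul_transpose, add_dotProduct,
    dotProduct_comm (N *ᵥ u) (M *ᵥ x), Sum.elim_comp_inl, Sum.elim_comp_inr] at h ⊢
  linarith

end Matrix

section Contraction

variable {a : ℕ → ℝ} {ϑ K : ℝ}

theorem le_pow_mul_sub_add_of_le_mul_add (hϑ : 0 ≤ ϑ)
    (h : ∀ t, a (t + 1) ≤ ϑ * a t + (1 - ϑ) * K) (t : ℕ) : a t ≤ ϑ ^ t * (a 0 - K) + K := by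
  induction t with
  | zero => simp
  | succ t ih =>
    calc a (t + 1) ≤ ϑ * a t + (1 - ϑ) * K := h t
      _ ≤ ϑ * (ϑ ^ t * (a 0 - K) + K) + (1 - ϑ) * K := by gcongr
      _ = ϑ ^ (t + 1) * (a 0 - K) + K := by ring

theorem limsup_le_of_le_mul_add (hϑ0 : 0 ≤ ϑ) (hϑ1 : ϑ < 1)
    (ha : IsBoundedUnder (· ≥ ·) atTop a) (h : ∀ t, a (t + 1) ≤ ϑ * a t + (1 - ϑ) * K) :
    limsup a atTop ≤ K := by
  have hlim : Tendsto (fun t => ϑ ^ t * (a 0 - K) + K) atTop (nhds K) := by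
    simpa using ((tendsto_pow_atTop_nhds_zero_of_lt_one hϑ0 hϑ1).mul_const (a 0 - K)).add_const K
  calc limsup a atTop ≤ limsup (fun t => ϑ ^ t * (a 0 - K) + K) atTop :=
        limsup_le_limsup (.of_forall (le_pow_mul_sub_add_of_le_mul_add hϑ0 h))
          ha.isCoboundedUnder_le hlim.isBoundedUnder_le
    _ = K := hlim.limsup_eq

end Contraction

theorem stmt_12_general {n m : ℕ} (M P : Matrix (Fin n) (Fin n) ℝ) (N : Matrix (Fin n) (Fin m) ℝ)
    (Θ : Matrix (Fin m) (Fin m) ℝ) (hΘ : Θ.PosDef)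
    (hZ : (-(Matrix.fromBlocks (Mᵀ * M - P) (Mᵀ * N) (Nᵀ * M) (Nᵀ * N - Θ))).PosSemidef)
    (ϑ : ℝ) (hϑ0 : 0 < ϑ) (hϑ1 : ϑ < 1)
    (hPϑ : (ϑ • (1 : Matrix (Fin n) (Fin n) ℝ) - P).PosSemidef)
    (δ θb : ℝ) (ξ : ℕ → Fin m → ℝ) (hξ : ∀ t, ξ t ⬝ᵥ ξ t ≤ δ)
    (hΘtr : Θ.trace ≤ θb) (e : ℕ → Fin n → ℝ)
    (hrec : ∀ t : ℕ, 1 ≤ t → e t = M.mulVec (e (t - 1)) + N.mulVec (ξ (t - 1))) :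
    limsup (fun t => e t ⬝ᵥ e t) atTop ≤ (⨆ i, hΘ.1.eigenvalues i) * δ / (1 - ϑ) ∧
      (⨆ i, hΘ.1.eigenvalues i) * δ / (1 - ϑ) ≤ θb * δ / (1 - ϑ) := by
  set lam := ⨆ i, hΘ.1.eigenvalues i
  have hlam : 0 ≤ lam := Real.iSup_nonneg fun i => (hΘ.eigenvalues_pos i).le
  have hδ : 0 ≤ δ := (dotProduct_self_star_nonneg (ξ 0)).trans (hξ 0)
  have hϑ : 1 - ϑ ≠ 0 := by linarith
  have hnoise (t : ℕ) : ξ t ⬝ᵥ Θ *ᵥ ξ t ≤ lam * δ :=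
    (dotProduct_mulVec_le_of_posSemidef_smul_one_sub
      hΘ.1.posSemidef_iSup_eigenvalues_smul_one_sub (ξ t)).trans (by gcongr; exact hξ t)
  have hstep (t : ℕ) :
      e (t + 1) ⬝ᵥ e (t + 1) ≤ ϑ * (e t ⬝ᵥ e t) + (1 - ϑ) * (lam * δ / (1 - ϑ)) := by
    rw [hrec (t + 1) (by omega), Nat.add_sub_cancel, mul_div_cancel₀ _ hϑ]
    exact (dotProduct_self_mulVec_add_mulVec_le hZ (e t) (ξ t)).trans
      (add_le_add (dotProduct_mulVec_le_of_posSemidef_smul_one_sub hPϑ (e t)) (hnoise t))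
  refine ⟨limsup_le_of_le_mul_add hϑ0.le hϑ1
    (isBoundedUnder_of ⟨0, fun t => dotProduct_self_star_nonneg (e t)⟩) hstep, ?_⟩
  have hϑ' : 0 < 1 - ϑ := by linarith
  gcongr
  exact hΘ.posSemidef.iSup_eigenvalues_le_trace.trans hΘtr

/-- If `Z = [[MᵀM − P, MᵀN],[NᵀM, NᵀN − Θ]]` is negative semidefinite,
`P ≤ ϑI` with `0 < ϑ < 1`, `ξ(t)ᵀξ(t) ≤ δ`, and `Tr Θ ≤ θ̄`, then the recursion
`e(t) = M e(t-1) + N ξ(t-1)` satisfies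
`limsup ‖e(t)‖² ≤ λ_max(Θ) δ/(1-ϑ) ≤ θ̄ δ/(1-ϑ)`. -/
theorem stmt_12 {n m : ℕ} (M P : Matrix (Fin n) (Fin n) ℝ) (N : Matrix (Fin n) (Fin m) ℝ)
    (Θ : Matrix (Fin m) (Fin m) ℝ) (hP : P.PosDef) (hΘ : Θ.PosDef)
    (hZ : (-(Matrix.fromBlocks (Mᵀ * M - P) (Mᵀ * N) (Nᵀ * M) (Nᵀ * N - Θ))).PosSemidef)
    (ϑ : ℝ) (hϑ0 : 0 < ϑ) (hϑ1 : ϑ < 1)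
    (hPϑ : (ϑ • (1 : Matrix (Fin n) (Fin n) ℝ) - P).PosSemidef)
    (δ θb : ℝ) (ξ : ℕ → Fin m → ℝ) (hξ : ∀ t, ξ t ⬝ᵥ ξ t ≤ δ)
    (hΘtr : Θ.trace ≤ θb) (e : ℕ → Fin n → ℝ)
    (hrec : ∀ t : ℕ, 1 ≤ t → e t = M.mulVec (e (t - 1)) + N.mulVec (ξ (t - 1))) :
    limsup (fun t => e t ⬝ᵥ e t) atTop ≤ (⨆ i, hΘ.1.eigenvalues i) * δ / (1 - ϑ) ∧
      (⨆ i, hΘ.1.eigenvalues i) * δ / (1 - ϑ) ≤ θb * δ / (1 - ϑ) :=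
  stmt_12_general M P N Θ hΘ hZ ϑ hϑ0 hϑ1 hPϑ δ θb ξ hξ hΘtr e hrec
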